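/- arXiv:1706.06618 — 3 statements merged into one kernel-verified Lean document; each statement's English description precedes it below -/
import Mathlib

section
/- Suppose g(t) ∈ ℚ(t) is a non-zero rational function. Then v_p(g(p)) = v_t(g(t)) for all but finitely many primes p. (Here, for all but finitely many primes p, g has no pole at p so g(p) ∈ ℚ is defined and non-zero.) -/
/-- The `t`-adic valuation of a (nonzero) rational function `g ∈ ℚ(t)`: the order of
vanishing of `g` at `t = 0` (negative if `g` has a pole at `0`). It is computed from
the reduced fraction `g = num/denom` as the difference of the multiplicities of the
root `0` in the numerator and the denominator. -/
noncomputable def tAdicVal (g : RatFunc ℚ) : ℤ :=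
  (g.num.rootMultiplicity 0 : ℤ) - (g.denom.rootMultiplicity 0 : ℤ)

/-!
Write `g = num / denom` and each of these as `t ^ k * h` with `h(0) ≠ 0`, so that it suffices
to show that `v_p(h(p)) = 0` for large `p`. After clearing denominators, `d • h` is an integer
polynomial `H`, and `H(p) ≡ H(0) = d h(0) ≢ 0 (mod p)` as soon as `p > |H(0)|`; for `p > |d|`
as well, `h(p) = H(p) / d` is a quotient of two `p`-adic units.
-/

open Polynomial Filter

namespace Polynomial

theorem not_dvd_eval_self {H : ℤ[X]} {n : ℤ} (h0 : H.eval 0 ≠ 0)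
    (hn : (H.eval 0).natAbs < n.natAbs) : ¬ n ∣ H.eval n := fun hdvd ↦ by
  have hdvd0 : n ∣ H.eval 0 := (dvd_sub_right hdvd).mp (by simpa using sub_dvd_eval_sub n 0 H)
  exact h0 (Int.eq_zero_of_dvd_of_natAbs_lt_natAbs hdvd0 hn)

theorem eventually_not_natCast_dvd_eval {H : ℤ[X]} (h0 : H.eval 0 ≠ 0) :
    ∀ᶠ p : ℕ in atTop, ¬ (p : ℤ) ∣ H.eval (p : ℤ) :=
  (eventually_gt_atTop (H.eval 0).natAbs).mono fun _ hp ↦ not_dvd_eval_self h0 hp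

theorem eventually_padicValRat_eval_eq_zero {h : ℚ[X]} (h0 : h.eval 0 ≠ 0) :
    ∀ᶠ p : ℕ in atTop, p.Prime → h.eval (p : ℚ) ≠ 0 ∧ padicValRat p (h.eval (p : ℚ)) = 0 := by
  obtain ⟨d, hd, hH⟩ := IsLocalization.integerNormalization_spec (nonZeroDivisors ℤ) h
  set H := IsLocalization.integerNormalization (nonZeroDivisors ℤ) h
  replace hd : (d : ℚ) ≠ 0 := Int.cast_ne_zero.mpr (nonZeroDivisors.ne_zero hd)
  have hHeval (n : ℤ) : ((H.eval n : ℤ) : ℚ) = d * h.eval (n : ℚ) := by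
    simpa [zsmul_eq_mul] using congr_arg (eval (n : ℚ)) hH
  have hH0 : H.eval 0 ≠ 0 := by
    have := hHeval 0
    push_cast at this
    exact_mod_cast this ▸ mul_ne_zero hd h0
  filter_upwards [eventually_not_natCast_dvd_eval hH0,
    eventually_not_natCast_dvd_eval (H := C d) (by simpa using hd)] with p hHp hdp hp
  have : Fact p.Prime := ⟨hp⟩
  rw [eval_C] at hdp
  have hHp0 : ((H.eval (p : ℤ) : ℤ) : ℚ) ≠ 0 := Int.cast_ne_zero.mpr fun hz ↦ hHp (hz ▸ dvd_zero _)
  have hhp : h.eval (p : ℚ) = H.eval (p : ℤ) / d := by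
    rw [hHeval, Int.cast_natCast, mul_div_cancel_left₀ _ hd]
  rw [hhp]
  refine ⟨div_ne_zero hHp0 hd, ?_⟩
  rw [padicValRat.div hHp0 hd, padicValRat.of_int, padicValRat.of_int,
    padicValInt.eq_zero_of_not_dvd hHp, padicValInt.eq_zero_of_not_dvd hdp, sub_self]

theorem eventually_padicValRat_eval_eq_rootMultiplicity {f : ℚ[X]} (hf : f ≠ 0) :
    ∀ᶠ p : ℕ in atTop, p.Prime →
      f.eval (p : ℚ) ≠ 0 ∧ padicValRat p (f.eval (p : ℚ)) = f.rootMultiplicity 0 := by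
  set k := f.rootMultiplicity 0
  set h := f /ₘ (X - C 0) ^ k
  have hf_eq : (p : ℚ) → f.eval p = p ^ k * h.eval p := fun p ↦ by
    conv_lhs => rw [← pow_mul_divByMonic_rootMultiplicity_eq f 0]
    simp [h, k]
  filter_upwards [eventually_padicValRat_eval_eq_zero
    (eval_divByMonic_pow_rootMultiplicity_ne_zero 0 hf)] with p hh hp
  have : Fact p.Prime := ⟨hp⟩
  obtain ⟨hh0, hhv⟩ := hh hp
  have hpk : (p : ℚ) ^ k ≠ 0 := pow_ne_zero _ (Nat.cast_ne_zero.mpr hp.ne_zero)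
  rw [hf_eq]
  refine ⟨mul_ne_zero hpk hh0, ?_⟩
  rw [padicValRat.mul hpk hh0, hhv, padicValRat.pow _,
    padicValRat.self hp.one_lt, mul_one, add_zero]

end Polynomial

/-- If `g ∈ ℚ(t)` is a nonzero rational function, then for all but finitely many primes
`p`, `g` has no pole at `p` (so `g(p)` is a well-defined nonzero rational number) and
`v_p(g(p)) = v_t(g)`. -/
theorem padicValRat_eval_eq_tAdicVal (g : RatFunc ℚ) (hg : g ≠ 0) :
    ∃ P : ℕ, ∀ p : ℕ, p.Prime → P < p →
      g.denom.eval (p : ℚ) ≠ 0 ∧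
      g.eval (RingHom.id ℚ) (p : ℚ) ≠ 0 ∧
      padicValRat p (g.eval (RingHom.id ℚ) (p : ℚ)) = tAdicVal g := by
  have hlarge := (eventually_padicValRat_eval_eq_rootMultiplicity (RatFunc.num_ne_zero hg)).and
    (eventually_padicValRat_eval_eq_rootMultiplicity g.denom_ne_zero)
  obtain ⟨P, hP⟩ := eventually_atTop.mp hlarge
  refine ⟨P, fun p hp hPp ↦ ?_⟩
  have : Fact p.Prime := ⟨hp⟩
  obtain ⟨⟨hnum, hnum_val⟩, hden, hden_val⟩ := (hP p hPp.le).imp (· hp) (· hp)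
  have heval : g.eval (RingHom.id ℚ) p = g.num.eval (p : ℚ) / g.denom.eval (p : ℚ) := rfl
  rw [heval, padicValRat.div hnum hden, hnum_val, hden_val, tAdicVal]
  exact ⟨hden, div_ne_zero hnum hden, rfl⟩
end

section
/- (Kummer's congruence.) Let p be a prime and k ≥ 1 an integer. Let m, n be positive even integers not divisible by p − 1 with m ≡ n (mod φ(p^k)), where φ is Euler's totient function. Then (1 − p^{m−1})·B_m/m ≡ (1 − p^{n−1})·B_n/n (mod p^k), i.e. v_p( (1 − p^{m−1})·B_m/m − (1 − p^{n−1})·B_n/n ) ≥ k. -/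
/-!
Pick `c` whose residue generates `(ℤ/p)ˣ`, so that `c ^ m - 1` is a `p`-adic unit as `p - 1 ∤ m`.
For `N = p ^ K` and each unit `a` modulo `N` write `c * a = r + N * q` with `r < N`. Since
`a ↦ r` permutes the units modulo `N`, expanding `(r + N q) ^ m` to first order gives
`(c ^ m - 1) ∑ a ^ m ≡ m N ∑ r ^ (m - 1) q  (mod N ^ 2)`, while Faulhaber's formula gives
`∑ a ^ m ≈ (1 - p ^ (m - 1)) B_m N` up to `p ^ (3 - 2K)`. Together,
`(1 - p ^ (m - 1)) B_m / m ≈ (∑ r ^ (m - 1) q) / (c ^ m - 1)` up to `p ^ (3 + v_p(m) - K)`, and by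
Euler's theorem the right-hand side modulo `p ^ k` only depends on `m` modulo `φ(p ^ k)`; take
`K = k + 3 + v_p(m) + v_p(n)`.
-/

open Finset

namespace KummerCongruence

theorem coprime_mul_mod {N c a : ℕ} (hc : N.Coprime c) (ha : N.Coprime a) :
    N.Coprime (c * a % N) := by
  rw [Nat.Coprime, Nat.gcd_comm, ← Nat.gcd_rec]
  exact hc.mul_right ha

theorem sum_comp_mul_mod {M : Type*} [AddCommMonoid M] {N c : ℕ} (hc : N.Coprime c)
    (f : ℕ → M) :
    ∑ a ∈ range N with N.Coprime a, f (c * a % N) = ∑ a ∈ range N with N.Coprime a, f a := by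
  set s := {a ∈ range N | N.Coprime a}
  have hmaps : ∀ a ∈ s, c * a % N ∈ s := by
    intro a ha
    simp only [s, mem_filter, mem_range] at ha ⊢
    exact ⟨Nat.mod_lt _ (by omega), coprime_mul_mod hc ha.2⟩
  have hinj : Set.InjOn (fun a ↦ c * a % N) s := by
    intro a ha b hb hab
    simp only [s, coe_filter, mem_range, Set.mem_ofPred_eq] at ha hb
    exact (Nat.ModEq.cancel_left_of_coprime hc hab).eq_of_lt_of_lt ha.1 hb.1
  have himage : s.image (fun a ↦ c * a % N) = s :=
    eq_of_subset_of_card_le (image_subset_iff.mpr hmaps) (card_image_of_injOn hinj).ge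
  rw [← sum_image hinj, himage]

theorem pow_eq_pow_of_modEq_totient {N a m n : ℕ} (ha : N.Coprime a)
    (h : m ≡ n [MOD N.totient]) : (a : ZMod N) ^ m = (a : ZMod N) ^ n := by
  rcases N.eq_zero_or_pos with rfl | hN
  · rw [Nat.totient_zero, Nat.modEq_zero_iff] at h
    rw [h]
  have : NeZero N := ⟨hN.ne'⟩
  have hcard : Nat.card (ZMod N)ˣ = N.totient := by
    rw [Nat.card_eq_fintype_card, ZMod.card_units_eq_totient]
  rw [← ZMod.coe_unitOfCoprime a ha.symm, ← Units.val_pow_eq_pow_val, ← Units.val_pow_eq_pow_val,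
    ← pow_mod_natCard, hcard, h, ← hcard, pow_mod_natCard]

theorem exists_coprime_pow_sub_one_not_dvd {p : ℕ} (hp : p.Prime) :
    ∃ c : ℕ, p.Coprime c ∧ ∀ m, ¬ (p - 1) ∣ m → ¬ (p : ℤ) ∣ (c : ℤ) ^ m - 1 := by
  have := Fact.mk hp
  obtain ⟨g, hg⟩ := IsCyclic.exists_ofOrder_eq_natCard (α := (ZMod p)ˣ)
  rw [Nat.card_eq_fintype_card, ZMod.card_units_eq_totient, Nat.totient_prime hp] at hg
  refine ⟨(g : ZMod p).val, ?_, fun m hm hdvd ↦ hm ?_⟩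
  · rw [hp.coprime_iff_not_dvd, ← ZMod.natCast_eq_zero_iff, ZMod.natCast_zmod_val]
    exact g.ne_zero
  · rw [← ZMod.intCast_zmod_eq_zero_iff_dvd] at hdvd
    push_cast at hdvd
    rw [ZMod.natCast_zmod_val, sub_eq_zero] at hdvd
    exact hg ▸ orderOf_dvd_of_pow_eq_one (Units.val_eq_one.mp (by simpa using hdvd))

def unitPowerSum (m N : ℕ) : ℤ := ∑ a ∈ range N with N.Coprime a, (a : ℤ) ^ m

def twistedSum (c m N : ℕ) : ℤ :=
  ∑ a ∈ range N with N.Coprime a, ((c * a % N : ℕ) : ℤ) ^ (m - 1) * (c * a / N : ℕ)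

theorem sq_dvd_pow_sub_one_mul_unitPowerSum_sub {N c : ℕ} (hc : N.Coprime c) (m : ℕ) :
    (N : ℤ) ^ 2 ∣ ((c : ℤ) ^ m - 1) * unitPowerSum m N - m * N * twistedSum c m N := by
  have hperm : unitPowerSum m N = ∑ a ∈ range N with N.Coprime a, ((c * a % N : ℕ) : ℤ) ^ m :=
    (sum_comp_mul_mod hc (fun a ↦ (a : ℤ) ^ m)).symm
  have hsum : ((c : ℤ) ^ m - 1) * unitPowerSum m N - m * N * twistedSum c m N =
      ∑ a ∈ range N with N.Coprime a,
        ((((c * a % N : ℕ) : ℤ) + N * (c * a / N : ℕ)) ^ m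
          - ((c * a % N : ℕ) : ℤ) ^ (m - 1) * (N * (c * a / N : ℕ)) * m
          - ((c * a % N : ℕ) : ℤ) ^ m) := by
    have hdiv (a : ℕ) : ((c * a % N : ℕ) : ℤ) + N * (c * a / N : ℕ) = c * a := by
      exact_mod_cast Nat.mod_add_div (c * a) N
    simp only [hdiv, sum_sub_distrib, mul_pow, ← mul_sum, ← hperm]
    rw [sub_mul, one_mul, sub_right_comm, twistedSum, unitPowerSum, mul_sum, mul_sum]
    congr 2
    exact sum_congr rfl fun _ _ ↦ by ring
  rw [hsum]
  exact dvd_sum fun a _ ↦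
    (pow_dvd_pow_of_dvd (dvd_mul_right _ _) 2).trans (sq_dvd_add_pow_sub_sub _ _ m)

theorem unitPowerSum_prime_pow_succ {p : ℕ} (hp : p.Prime) (m K : ℕ) :
    unitPowerSum m (p ^ (K + 1)) =
      ∑ a ∈ range (p ^ (K + 1)), (a : ℤ) ^ m - p ^ m * ∑ b ∈ range (p ^ K), (b : ℤ) ^ m := by
  have hcop (a : ℕ) : (p ^ (K + 1)).Coprime a ↔ ¬ p ∣ a := by
    rw [Nat.coprime_pow_left_iff K.succ_pos, hp.coprime_iff_not_dvd]
  have hmultiples : {a ∈ range (p ^ (K + 1)) | ¬ (p ^ (K + 1)).Coprime a} =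
      (range (p ^ K)).image (p * ·) := by
    ext a
    simp only [hcop, not_not, mem_filter, mem_range, mem_image]
    constructor
    · rintro ⟨ha, b, rfl⟩
      exact ⟨b, by rw [pow_succ', Nat.mul_lt_mul_left hp.pos] at ha; exact ha, rfl⟩
    · rintro ⟨b, hb, rfl⟩
      exact ⟨by rw [pow_succ']; exact Nat.mul_lt_mul_of_pos_left hb hp.pos, dvd_mul_right _ _⟩
  rw [unitPowerSum, ← sum_filter_add_sum_filter_not (range _) (p ^ (K + 1)).Coprime, hmultiples,
    sum_image fun _ _ _ _ h ↦ Nat.eq_of_mul_eq_mul_left hp.pos h, mul_sum]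
  push_cast
  simp only [mul_pow, add_sub_cancel_right]

theorem twistedSum_cast_eq_of_modEq_totient {p c k K m n : ℕ} (hK : K ≠ 0) (hc : (p ^ K).Coprime c)
    (hm : m ≠ 0) (hn : n ≠ 0) (hmn : m ≡ n [MOD (p ^ k).totient]) :
    (twistedSum c m (p ^ K) : ZMod (p ^ k)) = twistedSum c n (p ^ K) := by
  have hmn' : m - 1 ≡ n - 1 [MOD (p ^ k).totient] := by
    refine Nat.ModEq.add_right_cancel' 1 ?_
    rwa [Nat.sub_add_cancel (Nat.one_le_iff_ne_zero.mpr hm),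
      Nat.sub_add_cancel (Nat.one_le_iff_ne_zero.mpr hn)]
  simp only [twistedSum, Int.cast_sum, Int.cast_mul, Int.cast_pow, Int.cast_natCast]
  refine sum_congr rfl fun a ha ↦ ?_
  have hr := coprime_mul_mod hc (mem_filter.mp ha).2
  rw [pow_eq_pow_of_modEq_totient ((hr.coprime_dvd_left (dvd_pow_self p hK)).pow_left k) hmn']

theorem norm_sub_le_max {S : Type*} [SeminormedAddCommGroup S] [IsUltrametricDist S] (x y : S) :
    ‖x - y‖ ≤ max ‖x‖ ‖y‖ := by
  simpa [sub_eq_add_neg] using IsUltrametricDist.norm_add_le_max x (-y)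

theorem norm_sub_le_of_norm_sub_le {S : Type*} [SeminormedAddCommGroup S] [IsUltrametricDist S]
    {a b x y : S} {r : ℝ} (ha : ‖a - x‖ ≤ r) (hb : ‖b - y‖ ≤ r) (hxy : ‖x - y‖ ≤ r) :
    ‖a - b‖ ≤ r := by
  rw [show a - b = (a - x) + ((x - y) - (b - y)) by abel]
  exact (IsUltrametricDist.norm_add_le_max _ _).trans
    (max_le ha ((norm_sub_le_max _ _).trans (max_le hxy hb)))

section Padic

variable {p : ℕ} [hp : Fact p.Prime]

theorem norm_natCast_eq_zpow {n : ℕ} (hn : n ≠ 0) :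
    ‖(n : ℚ_[p])‖ = (p : ℝ) ^ (-(padicValNat p n : ℤ)) := by
  rw [Padic.norm_eq_zpow_neg_valuation (Nat.cast_ne_zero.mpr hn), Padic.valuation_natCast]

theorem norm_inv_natCast_le_of_prime {q : ℕ} (hq : q.Prime) : ‖(q : ℚ_[p])⁻¹‖ ≤ p := by
  rw [norm_inv]
  by_cases hpq : p = q
  · rw [← hpq, Padic.norm_p, inv_inv]
  · rw [Padic.norm_natCast_eq_one_iff.mpr ((Nat.coprime_primes hp.out hq).mpr hpq), inv_one]
    exact_mod_cast hp.out.one_le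

theorem norm_bernoulli_le (i : ℕ) : ‖(bernoulli i : ℚ_[p])‖ ≤ p := by
  have hp1 : (1 : ℝ) ≤ p := by exact_mod_cast hp.out.one_le
  obtain ⟨k, rfl | rfl⟩ := Nat.even_or_odd' i
  · obtain ⟨z, hz⟩ := Bernoulli.vonStaudt_clausen k
    rw [eq_sub_of_add_eq hz.symm]
    push_cast
    refine (norm_sub_le_max _ _).trans (max_le ((Padic.norm_int_le_one z).trans hp1) ?_)
    refine IsUltrametricDist.norm_sum_le_of_forall_le_of_nonneg (by positivity) fun q hq ↦ ?_
    rw [one_div]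
    exact norm_inv_natCast_le_of_prime (mem_filter.mp hq).2.1
  · rcases k with _ | k
    · rw [bernoulli_one]
      push_cast
      rw [neg_div, norm_neg, one_div]
      exact_mod_cast norm_inv_natCast_le_of_prime (p := p) Nat.prime_two
    · rw [bernoulli_eq_zero_of_odd (odd_two_mul_add_one _) (by omega)]
      simp

theorem norm_choose_div_le {m i : ℕ} (hi : i ≤ m) :
    ‖((m + 1).choose i : ℚ_[p]) / (m + 1)‖ ≤ (p : ℝ) ^ (m - i) := by
  have ht : m + 1 - i ≠ 0 := by omega
  have hchoose : ((m + 1).choose i : ℚ_[p]) / (m + 1) = (m.choose i : ℚ_[p]) / (m + 1 - i : ℕ) := by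
    rw [div_eq_div_iff (by exact_mod_cast m.succ_ne_zero) (by exact_mod_cast ht)]
    exact_mod_cast (Nat.choose_mul_succ_eq m i).symm
  have hval : padicValNat p (m + 1 - i) ≤ m - i := by
    have := Nat.factorization_lt p ht
    rw [Nat.factorization_def _ hp.out] at this
    omega
  have hp0 : (0 : ℝ) < p := by exact_mod_cast hp.out.pos
  rw [hchoose, norm_div, norm_natCast_eq_zpow ht, div_le_iff₀ (zpow_pos hp0 _), ← zpow_natCast,
    ← zpow_add₀ hp0.ne']
  refine (IsUltrametricDist.norm_natCast_le_one ℚ_[p] _).trans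
    (one_le_zpow₀ (by exact_mod_cast hp.out.one_le) ?_)
  omega

theorem norm_faulhaber_term_le {m i : ℕ} (hi : i < m) (J : ℕ) :
    ‖(bernoulli i : ℚ_[p]) * ((m + 1).choose i : ℕ) * ((p : ℚ_[p]) ^ (J + 1)) ^ (m + 1 - i) /
        (m + 1)‖ ≤ (p : ℝ) ^ (-(2 * J) : ℤ) := by
  have hp0 : (0 : ℝ) < p := by exact_mod_cast hp.out.pos
  obtain ⟨s, rfl⟩ : ∃ s, m = i + s + 1 := ⟨m - i - 1, by omega⟩
  rw [show i + s + 1 + 1 - i = s + 2 by omega, mul_div_right_comm, mul_div_assoc, ← pow_mul,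
    norm_mul, norm_mul, Padic.norm_p_pow]
  calc ‖(bernoulli i : ℚ_[p])‖ * ‖((i + s + 1 + 1).choose i : ℚ_[p]) / (↑(i + s + 1) + 1)‖ *
        (p : ℝ) ^ (-((J + 1) * (s + 2) : ℕ) : ℤ)
      ≤ p * p ^ (s + 1) * (p : ℝ) ^ (-((J + 1) * (s + 2) : ℕ) : ℤ) := by
        gcongr
        · exact norm_bernoulli_le i
        · simpa [show i + s + 1 - i = s + 1 by omega] using
            norm_choose_div_le (p := p) (m := i + s + 1) (i := i) (by omega)
    _ = (p : ℝ) ^ (-(J * (s + 2) : ℤ)) := by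
        rw [← pow_succ', ← zpow_natCast, ← zpow_add₀ hp0.ne']
        congr 1
        push_cast
        ring
    _ ≤ (p : ℝ) ^ (-(2 * J) : ℤ) :=
        zpow_le_zpow_right₀ (by exact_mod_cast hp.out.one_le) (by nlinarith)

theorem norm_sum_range_pow_sub_le {m : ℕ} (hm : m ≠ 0) (J : ℕ) :
    ‖∑ a ∈ range (p ^ J), (a : ℚ_[p]) ^ m - bernoulli m * p ^ J‖ ≤ (p : ℝ) ^ (2 - 2 * J : ℤ) := by
  have hp1 : (1 : ℝ) ≤ p := by exact_mod_cast hp.out.one_le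
  rcases J with _ | J
  · simp only [pow_zero, range_one, sum_singleton, Nat.cast_zero, zero_pow hm, mul_one, zero_sub,
      norm_neg]
    exact (norm_bernoulli_le m).trans (by simpa using le_self_pow₀ hp1 two_ne_zero)
  have hfaulhaber := congrArg (Rat.cast : ℚ → ℚ_[p]) (sum_range_pow (p ^ (J + 1)) m)
  push_cast at hfaulhaber
  have hlast : (bernoulli m : ℚ_[p]) * ((m + 1).choose m : ℕ) *
      ((p : ℚ_[p]) ^ (J + 1)) ^ (m + 1 - m) / (m + 1) = bernoulli m * p ^ (J + 1) := by
    rw [Nat.choose_succ_self_right, Nat.add_sub_cancel_left, pow_one]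
    push_cast
    field_simp
  rw [hfaulhaber, sum_range_succ, hlast, add_sub_cancel_right]
  refine IsUltrametricDist.norm_sum_le_of_forall_le_of_nonneg (by positivity) fun i hi ↦ ?_
  exact (norm_faulhaber_term_le (mem_range.mp hi) J).trans_eq (by push_cast; ring_nf)

theorem norm_unitPowerSum_sub_le {m K : ℕ} (hm : m ≠ 0) (hK : K ≠ 0) :
    ‖(unitPowerSum m (p ^ K) : ℚ_[p]) - (1 - (p : ℚ_[p]) ^ (m - 1)) * bernoulli m * p ^ K‖ ≤
      (p : ℝ) ^ (3 - 2 * K : ℤ) := by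
  have hp0 : (0 : ℝ) < p := by exact_mod_cast hp.out.pos
  have hp1 : (1 : ℝ) ≤ p := by exact_mod_cast hp.out.one_le
  obtain ⟨J, rfl⟩ := Nat.exists_eq_succ_of_ne_zero hK
  have hrec := congrArg (Int.cast : ℤ → ℚ_[p]) (unitPowerSum_prime_pow_succ hp.out m J)
  push_cast at hrec
  have hpow : (p : ℚ_[p]) ^ (m - 1) * p ^ (J + 1) = p ^ m * p ^ J := by
    rw [← pow_add, ← pow_add]
    congr 1
    omega
  have hsplit : (unitPowerSum m (p ^ (J + 1)) : ℚ_[p]) -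
      (1 - (p : ℚ_[p]) ^ (m - 1)) * bernoulli m * p ^ (J + 1) =
      (∑ a ∈ range (p ^ (J + 1)), (a : ℚ_[p]) ^ m - bernoulli m * p ^ (J + 1)) -
        p ^ m * (∑ b ∈ range (p ^ J), (b : ℚ_[p]) ^ m - bernoulli m * p ^ J) := by
    rw [hrec]
    linear_combination (bernoulli m : ℚ_[p]) * hpow
  rw [hsplit]
  refine (norm_sub_le_max _ _).trans (max_le ((norm_sum_range_pow_sub_le hm _).trans
    (zpow_le_zpow_right₀ hp1 (by omega))) ?_)
  rw [norm_mul, Padic.norm_p_pow]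
  calc (p : ℝ) ^ (-m : ℤ) * ‖∑ b ∈ range (p ^ J), (b : ℚ_[p]) ^ m - bernoulli m * p ^ J‖
      ≤ (p : ℝ) ^ (-m : ℤ) * (p : ℝ) ^ (2 - 2 * J : ℤ) := by
        gcongr
        exact norm_sum_range_pow_sub_le hm J
    _ ≤ (p : ℝ) ^ (3 - 2 * (J + 1 : ℕ) : ℤ) := by
        rw [← zpow_add₀ hp0.ne']
        exact zpow_le_zpow_right₀ hp1 (by omega)

theorem norm_intCast_eq_one_of_not_dvd {z : ℤ} (hz : ¬ (p : ℤ) ∣ z) : ‖(z : ℚ_[p])‖ = 1 :=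
  (Padic.norm_int_le_one z).antisymm (not_lt.mp (mt Padic.norm_intCast_lt_one_iff.mp hz))

theorem norm_sub_twistedSum_div_le {c m K : ℕ} (hc : p.Coprime c)
    (hcm : ¬ (p : ℤ) ∣ (c : ℤ) ^ m - 1) (hm : m ≠ 0) (hK : K ≠ 0) :
    ‖(1 - (p : ℚ_[p]) ^ (m - 1)) * bernoulli m / m - twistedSum c m (p ^ K) / ((c : ℚ_[p]) ^ m - 1)‖
      ≤ (p : ℝ) ^ (3 + padicValNat p m - K : ℤ) := by
  have hp0 : (0 : ℝ) < p := by exact_mod_cast hp.out.pos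
  have hp1 : (1 : ℝ) ≤ p := by exact_mod_cast hp.out.one_le
  set C : ℚ_[p] := (c : ℚ_[p]) ^ m - 1
  set T : ℚ_[p] := (unitPowerSum m (p ^ K) : ℚ_[p])
  set U : ℚ_[p] := (twistedSum c m (p ^ K) : ℚ_[p])
  have hC : ‖C‖ = 1 := by simpa [C] using norm_intCast_eq_one_of_not_dvd hcm
  have hC0 : C ≠ 0 := norm_ne_zero_iff.mp (hC.trans_ne one_ne_zero)
  have hR : ‖C * T - m * p ^ K * U‖ ≤ (p : ℝ) ^ (-(2 * K : ℕ) : ℤ) := by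
    have := sq_dvd_pow_sub_one_mul_unitPowerSum_sub (Nat.Coprime.pow_left K hc) m
    rw [Nat.cast_pow, ← pow_mul, mul_comm K] at this
    simpa [C, T, U] using (Padic.norm_int_le_pow_iff_dvd _ _).mpr this
  have hE := norm_unitPowerSum_sub_le (p := p) hm hK
  have hidentity : (1 - (p : ℚ_[p]) ^ (m - 1)) * bernoulli m / m - U / C =
      ((C * T - m * p ^ K * U) - C * (T - (1 - (p : ℚ_[p]) ^ (m - 1)) * bernoulli m * p ^ K)) /
        (m * p ^ K * C) := by
    have : (p : ℚ_[p]) ≠ 0 := by exact_mod_cast hp.out.ne_zero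
    field_simp
    ring
  rw [hidentity, norm_div, div_le_iff₀ (norm_pos_iff.mpr (by simp [hC0, hm, hp.out.ne_zero])),
    norm_mul, norm_mul, hC, mul_one, norm_natCast_eq_zpow hm, Padic.norm_p_pow,
    ← zpow_add₀ hp0.ne', ← zpow_add₀ hp0.ne']
  refine (norm_sub_le_max _ _).trans (max_le (hR.trans (zpow_le_zpow_right₀ hp1 ?_)) ?_)
  · push_cast
    omega
  · rw [norm_mul, hC, one_mul]
    exact hE.trans_eq (by congr 1; ring)

theorem norm_twistedSum_div_sub_le {c k K m n : ℕ} (hc : p.Coprime c)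
    (hcm : ¬ (p : ℤ) ∣ (c : ℤ) ^ m - 1) (hcn : ¬ (p : ℤ) ∣ (c : ℤ) ^ n - 1) (hK : K ≠ 0)
    (hm : m ≠ 0) (hn : n ≠ 0) (hmn : m ≡ n [MOD (p ^ k).totient]) :
    ‖twistedSum c m (p ^ K) / ((c : ℚ_[p]) ^ m - 1) -
        twistedSum c n (p ^ K) / ((c : ℚ_[p]) ^ n - 1)‖ ≤ (p : ℝ) ^ (-k : ℤ) := by
  have hdvd : (p : ℤ) ^ k ∣
      ((c : ℤ) ^ n - 1) * twistedSum c m (p ^ K) - ((c : ℤ) ^ m - 1) * twistedSum c n (p ^ K) := by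
    rw [← Nat.cast_pow, ← ZMod.intCast_zmod_eq_zero_iff_dvd]
    push_cast
    rw [twistedSum_cast_eq_of_modEq_totient hK (hc.pow_left K) hm hn hmn,
      pow_eq_pow_of_modEq_totient (hc.pow_left k) hmn, sub_self]
  have hcm' := norm_intCast_eq_one_of_not_dvd (p := p) hcm
  have hcn' := norm_intCast_eq_one_of_not_dvd (p := p) hcn
  push_cast at hcm' hcn'
  rw [div_sub_div _ _ (norm_ne_zero_iff.mp (hcm'.trans_ne one_ne_zero))
    (norm_ne_zero_iff.mp (hcn'.trans_ne one_ne_zero)), norm_div, norm_mul, hcm', hcn', mul_one,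
    div_one]
  simpa [mul_comm] using (Padic.norm_int_le_pow_iff_dvd _ _).mpr hdvd

theorem le_padicValRat_of_norm_le {q : ℚ} (hq : q ≠ 0) {k : ℤ}
    (h : ‖(q : ℚ_[p])‖ ≤ (p : ℝ) ^ (-k)) : k ≤ padicValRat p q := by
  rw [Padic.norm_eq_zpow_neg_valuation (Rat.cast_ne_zero.mpr hq), Padic.valuation_ratCast,
    zpow_le_zpow_iff_right₀ (by exact_mod_cast hp.out.one_lt)] at h
  exact neg_le_neg_iff.mp h

end Padic

end KummerCongruence

open KummerCongruence

theorem kummer_congruence_general (p : ℕ) (hp : p.Prime) (k : ℕ)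
    (m n : ℕ) (hm : 0 < m) (hn : 0 < n)
    (hmd : ¬ (p - 1) ∣ m) (hnd : ¬ (p - 1) ∣ n)
    (hmn : m ≡ n [MOD Nat.totient (p ^ k)]) :
    (1 - (p : ℚ) ^ (m - 1)) * bernoulli m / m
        - (1 - (p : ℚ) ^ (n - 1)) * bernoulli n / n = 0 ∨
      (k : ℤ) ≤ padicValRat p
        ((1 - (p : ℚ) ^ (m - 1)) * bernoulli m / m
          - (1 - (p : ℚ) ^ (n - 1)) * bernoulli n / n) := by
  have := Fact.mk hp
  obtain ⟨c, hc, hc_pow⟩ := exists_coprime_pow_sub_one_not_dvd hp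
  obtain ⟨K, hK⟩ : ∃ K, K = k + 3 + padicValNat p m + padicValNat p n := ⟨_, rfl⟩
  have hp1 : (1 : ℝ) ≤ p := by exact_mod_cast hp.one_le
  have hbm := norm_sub_twistedSum_div_le hc (hc_pow m hmd) hm.ne' (K := K) (by omega)
  have hbn := norm_sub_twistedSum_div_le hc (hc_pow n hnd) hn.ne' (K := K) (by omega)
  have hbmn := norm_twistedSum_div_sub_le hc (hc_pow m hmd) (hc_pow n hnd) (K := K) (by omega)
    hm.ne' hn.ne' hmn
  refine or_iff_not_imp_left.mpr fun hD ↦ le_padicValRat_of_norm_le hD ?_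
  push_cast
  exact norm_sub_le_of_norm_sub_le (hbm.trans (zpow_le_zpow_right₀ hp1 (by omega)))
    (hbn.trans (zpow_le_zpow_right₀ hp1 (by omega))) hbmn

/-- **Kummer's congruence.** For a prime `p`, an integer `k ≥ 1`, and positive even
integers `m`, `n` not divisible by `p - 1` with `m ≡ n (mod φ(p^k))`, one has
`(1 - p^(m-1)) * B m / m ≡ (1 - p^(n-1)) * B n / n (mod p^k)`, i.e. the `p`-adic
valuation of the difference is at least `k`. -/
theorem kummer_congruence (p : ℕ) (hp : p.Prime) (k : ℕ) (hk : 1 ≤ k)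
    (m n : ℕ) (hm : 0 < m) (hn : 0 < n) (hme : Even m) (hne : Even n)
    (hmd : ¬ (p - 1) ∣ m) (hnd : ¬ (p - 1) ∣ n)
    (hmn : m ≡ n [MOD Nat.totient (p ^ k)]) :
    (1 - (p : ℚ) ^ (m - 1)) * bernoulli m / m
        - (1 - (p : ℚ) ^ (n - 1)) * bernoulli n / n = 0 ∨
      (k : ℤ) ≤ padicValRat p
        ((1 - (p : ℚ) ^ (m - 1)) * bernoulli m / m
          - (1 - (p : ℚ) ^ (n - 1)) * bernoulli n / n) :=
  kummer_congruence_general p hp k m n hm hn hmd hnd hmn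
end

section
/- (von Staudt–Clausen.) For every even integer n ≥ 2, the rational number B_n + Σ_{p prime, (p−1) | n} 1/p is an integer. -/
theorem vonStaudt_Clausen_general (n : ℕ) (hne : Even n) :
    ∃ z : ℤ,
      bernoulli n +
        ∑ p ∈ (Finset.range (n + 2)).filter (fun p => p.Prime ∧ (p - 1) ∣ n),
          (1 : ℚ) / p = z := by
  obtain ⟨k, rfl⟩ := hne.two_dvd
  obtain ⟨z, hz⟩ := Bernoulli.vonStaudt_clausen k
  exact ⟨z, hz.symm⟩

/-- **von Staudt–Clausen.** For every even integer `n ≥ 2`, the rational number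
`B n + ∑_{p prime, (p-1) ∣ n} 1/p` is an integer. (Any prime `p` with `p - 1 ∣ n`
satisfies `p ≤ n + 1`, so the sum may be taken over `p < n + 2`.) -/
theorem vonStaudt_Clausen (n : ℕ) (hn : 2 ≤ n) (hne : Even n) :
    ∃ z : ℤ,
      bernoulli n +
        ∑ p ∈ (Finset.range (n + 2)).filter (fun p => p.Prime ∧ (p - 1) ∣ n),
          (1 : ℚ) / p = z :=
  vonStaudt_Clausen_general n hne
end
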